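/- In the setting of the forward-chaining chain S = W_0 ⊊ W_1 ⊊ ⋯ ⊊ W_t ⊇ S' associated with a round-minimal L-optimal CNF Φ for price_L(S,S'), with B_i a smallest member of 𝓑 contained in W_i for i = 0,…,t−1 and B_t := S', we have W_{i+1} \ W_i ⊆ B_{i+1} for every i = 0,…,t−1. -/

import Mathlib

/-!
Suppose `v ∈ W_{i+1} \ W_i` but `v ∉ B_{i+1}`, and let `C → v` be a clause of `Φ` firing in
round `i + 1`, so `|B_i| ≤ |C|`. Since `v ∉ W_i`, everything in `W_{i+1}` other than `v` is derived
without clauses with head `v`. If `i + 1 = t`, then `v ∉ S'`, so the clause `C → v` can be dropped,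
contradicting L-optimality. Otherwise `|B_{i+1}| ≤ |B_i|` because `B_i ⊆ W_{i+1}`. If this is strict,
replacing every clause with head `v` by `B_{i+1} → v` is strictly cheaper and still reaches `S'`,
since `B_{i+1} ⊆ W_{i+1} \ {v}`. If `|B_{i+1}| = |B_i|`, giving every `u ∈ W_{i+2} \ W_{i+1}` the
body `B_i ⊆ W_i` costs no more and derives `u` one round earlier, so the chain stabilises after
`t - 1` rounds, contradicting round-minimality.
-/

open Finset

variable {V : Type*} [Fintype V] [DecidableEq V]

/-- A pure Horn CNF is a finite set of clauses `(B, v)`: body `B`, head `v`,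
with `B` nonempty and `v ∉ B`. -/
def PureHorn (Φ : Finset (Finset V × V)) : Prop :=
  ∀ c ∈ Φ, c.1.Nonempty ∧ c.2 ∉ c.1

/-- A set `W` is closed under the clauses of `Φ`. -/
def HornClosed (Φ : Finset (Finset V × V)) (W : Set V) : Prop :=
  ∀ c ∈ Φ, ↑c.1 ⊆ W → c.2 ∈ W

/-- Forward-chaining closure `F_Φ(Z)`: the smallest set containing `Z`
that is closed under the clauses of `Φ`. -/
def hornClosure (Φ : Finset (Finset V × V)) (Z : Set V) : Set V :=
  ⋂₀ {W : Set V | Z ⊆ W ∧ HornClosed Φ W}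

/-- `Ψ_𝓑 = ⋀_{B ∈ 𝓑} B → (V \ B)`. -/
def keyCNF (𝓑 : Finset (Finset V)) : Finset (Finset V × V) :=
  𝓑.biUnion fun B => (Finset.univ \ B).image fun v => (B, v)

/-- `Φ` represents the key Horn function `h_𝓑`, i.e. `Φ` is a pure Horn CNF
equivalent to `Ψ_𝓑`. -/
def Represents (𝓑 : Finset (Finset V)) (Φ : Finset (Finset V × V)) : Prop :=
  PureHorn Φ ∧ ∀ Z : Finset V, hornClosure Φ ↑Z = hornClosure (keyCNF 𝓑) ↑Z

/-- (B) number of (distinct) bodies. -/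
def sizeB (Φ : Finset (Finset V × V)) : ℕ := (Φ.image Prod.fst).card
/-- (BA) body area `Σ_i |B_i|` over the distinct bodies. -/
def sizeBA (Φ : Finset (Finset V × V)) : ℕ := ∑ B ∈ Φ.image Prod.fst, B.card
/-- (C) number of clauses `Σ_i |H_i|`. -/
def sizeC (Φ : Finset (Finset V × V)) : ℕ := Φ.card
/-- (TA) total area `Σ_i (|B_i| + |H_i|)`. -/
def sizeTA (Φ : Finset (Finset V × V)) : ℕ := sizeBA Φ + sizeC Φ
/-- (BC) bodies plus clauses `Σ_i (|H_i| + 1)`. -/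
def sizeBC (Φ : Finset (Finset V × V)) : ℕ := sizeB Φ + sizeC Φ
/-- (L) number of literals `Σ_i (|B_i| + 1)·|H_i|`. -/
def sizeL (Φ : Finset (Finset V × V)) : ℕ := ∑ c ∈ Φ, (c.1.card + 1)

/-- `μ` is one of the six size measures. -/
def IsMeasure (μ : Finset (Finset V × V) → ℕ) : Prop :=
  μ = sizeB ∨ μ = sizeBA ∨ μ = sizeTA ∨ μ = sizeC ∨ μ = sizeBC ∨ μ = sizeL

/-- `OPT_μ(𝓑)`: minimum `μ`-size of a CNF representing `h_𝓑`. -/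
noncomputable def OPT (μ : Finset (Finset V × V) → ℕ) (𝓑 : Finset (Finset V)) : ℕ :=
  sInf {s : ℕ | ∃ Φ : Finset (Finset V × V), Represents 𝓑 Φ ∧ μ Φ = s}

/-- `price_μ(S,T)`: minimum `μ`-size of a pure Horn CNF with bodies in `𝓑`
whose forward chaining from `S` reaches all of `T`. -/
noncomputable def price (μ : Finset (Finset V × V) → ℕ) (𝓑 : Finset (Finset V))
    (S T : Finset V) : ℕ :=
  sInf {s : ℕ | ∃ Φ : Finset (Finset V × V),
    PureHorn Φ ∧ (∀ c ∈ Φ, c.1 ∈ 𝓑) ∧ ↑T ⊆ hornClosure Φ ↑S ∧ μ Φ = s}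

/-- One round of forward chaining. -/
def fcStep (Φ : Finset (Finset V × V)) (W : Finset V) : Finset V :=
  W ∪ (Φ.filter fun c => c.1 ⊆ W).image Prod.snd

/-- The forward-chaining chain `W_0 = S`, `W_{i+1} = fcStep Φ W_i`. -/
def fcChain (Φ : Finset (Finset V × V)) (S : Finset V) : ℕ → Finset V
  | 0 => S
  | i + 1 => fcStep Φ (fcChain Φ S i)

/-- The CNF `⋀_{i=0}^{t-1} Bs i → (Bs (i+1) \ (S ∪ ⋃_{j=1}^{i} Bs j))`. -/
def chainCNF (S : Finset V) (Bs : ℕ → Finset V) (t : ℕ) :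
    Finset (Finset V × V) :=
  (Finset.range t).biUnion fun i =>
    (Bs (i + 1) \ (S ∪ (Finset.Icc 1 i).biUnion Bs)).image fun v => (Bs i, v)


section Closure

variable {α : Type*} {Φ Ψ : Finset (Finset α × α)} {Z X : Set α}

theorem subset_hornClosure (Φ : Finset (Finset α × α)) (Z : Set α) : Z ⊆ hornClosure Φ Z :=
  fun _ hx => Set.mem_sInter.2 fun _ hW => hW.1 hx

theorem hornClosed_hornClosure (Φ : Finset (Finset α × α)) (Z : Set α) :
    HornClosed Φ (hornClosure Φ Z) :=
  fun c hc hbody => Set.mem_sInter.2 fun _ hW =>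
    hW.2 c hc (hbody.trans (Set.sInter_subset_of_mem hW))

theorem hornClosure_subset (hZ : Z ⊆ X) (hX : HornClosed Φ X) : hornClosure Φ Z ⊆ X :=
  Set.sInter_subset_of_mem ⟨hZ, hX⟩

theorem hornClosure_subset_hornClosure (h : ∀ c ∈ Φ, c ∈ Ψ ∨ c.2 ∈ hornClosure Ψ Z) :
    hornClosure Φ Z ⊆ hornClosure Ψ Z := by
  refine hornClosure_subset (subset_hornClosure Ψ Z) fun c hc hbody => ?_
  rcases h c hc with hcΨ | hhead
  · exact hornClosed_hornClosure Ψ Z c hcΨ hbody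
  · exact hhead

end Closure

section Price

variable {α : Type*}

/-- The CNFs competing in `price_μ(S, T)`. -/
def Feasible (𝓑 : Finset (Finset α)) (S T : Finset α) (Φ : Finset (Finset α × α)) : Prop :=
  PureHorn Φ ∧ (∀ c ∈ Φ, c.1 ∈ 𝓑) ∧ ↑T ⊆ hornClosure Φ ↑S

theorem price_le {𝓑 : Finset (Finset α)} {S T : Finset α} {Φ : Finset (Finset α × α)}
    (μ : Finset (Finset α × α) → ℕ) (h : Feasible 𝓑 S T Φ) : price μ 𝓑 S T ≤ μ Φ :=
  Nat.sInf_le ⟨Φ, h.1, h.2.1, h.2.2, rfl⟩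

end Price

section ForwardChaining

variable {α : Type*} [DecidableEq α] {Φ Ψ : Finset (Finset α × α)} {S W W' : Finset α}
  {X : Set α} {u v : α} {i t : ℕ}

theorem mem_fcStep : u ∈ fcStep Φ W ↔ u ∈ W ∨ ∃ c ∈ Φ, c.1 ⊆ W ∧ c.2 = u := by
  simp only [fcStep, mem_union, mem_image, mem_filter, and_assoc]

theorem exists_clause_of_mem_fcStep (hu : u ∈ fcStep Φ W) (huW : u ∉ W) :
    ∃ c ∈ Φ, c.1 ⊆ W ∧ c.2 = u :=
  (mem_fcStep.1 hu).resolve_left huW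

theorem subset_fcStep : W ⊆ fcStep Φ W := subset_union_left

theorem fcChain_mono : Monotone (fcChain Φ S) :=
  monotone_nat_of_le_succ fun _ => subset_fcStep

theorem fcStep_subset_fcStep (hW : W ⊆ W') (hΨ : ∀ c ∈ Φ, c.1 ⊆ W → c.2 ∉ W' → c ∈ Ψ) :
    fcStep Φ W ⊆ fcStep Ψ W' := by
  intro u hu
  rcases mem_fcStep.1 hu with huW | ⟨c, hc, hbody, rfl⟩
  · exact subset_fcStep (hW huW)
  by_cases hhead : c.2 ∈ W'
  · exact subset_fcStep hhead
  · exact mem_fcStep.2 (.inr ⟨c, hΨ c hc hbody hhead, hbody.trans hW, rfl⟩)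

theorem coe_fcChain_subset_of_hornClosed (hS : ↑S ⊆ X) (hX : HornClosed Φ X) :
    ∀ j, ↑(fcChain Φ S j) ⊆ X
  | 0 => hS
  | j + 1 => fun u hu => by
    rcases mem_fcStep.1 hu with huW | ⟨c, hc, hbody, rfl⟩
    · exact coe_fcChain_subset_of_hornClosed hS hX j huW
    · exact hX c hc ((coe_subset.2 hbody).trans (coe_fcChain_subset_of_hornClosed hS hX j))

theorem coe_fcChain_subset_hornClosure (j : ℕ) : ↑(fcChain Φ S j) ⊆ hornClosure Φ ↑S :=
  coe_fcChain_subset_of_hornClosed (subset_hornClosure Φ _) (hornClosed_hornClosure Φ _) j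

theorem hornClosed_fcChain (hstab : fcChain Φ S t = fcChain Φ S (t + 1)) :
    HornClosed Φ ↑(fcChain Φ S t) := fun c hc hbody => by
  rw [hstab]
  exact mem_fcStep.2 (.inr ⟨c, hc, coe_subset.1 hbody, rfl⟩)

theorem hornClosure_eq_fcChain (hstab : fcChain Φ S t = fcChain Φ S (t + 1)) :
    hornClosure Φ ↑S = ↑(fcChain Φ S t) :=
  (hornClosure_subset (coe_subset.2 (fcChain_mono t.zero_le)) (hornClosed_fcChain hstab)).antisymm
    (coe_fcChain_subset_hornClosure t)

theorem fcChain_sdiff_singleton_subset (hv : v ∉ fcChain Φ S i)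
    (hΨ : ∀ c ∈ Φ, c.2 ≠ v → c ∈ Ψ) : ∀ j ≤ i + 1, fcChain Φ S j \ {v} ⊆ fcChain Ψ S j
  | 0, _ => sdiff_subset
  | j + 1, hj => fun u hu => by
    obtain ⟨hu, huv⟩ := mem_sdiff.1 hu
    have ih := fcChain_sdiff_singleton_subset hv hΨ j (by omega)
    rcases mem_fcStep.1 hu with huW | ⟨c, hc, hbody, rfl⟩
    · exact subset_fcStep (ih (mem_sdiff.2 ⟨huW, huv⟩))
    have hvW : v ∉ fcChain Φ S j := fun h => hv (fcChain_mono (by omega) h)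
    refine mem_fcStep.2 (.inr ⟨c, hΨ c hc (by simpa using huv), fun x hx => ih ?_, rfl⟩)
    exact mem_sdiff.2 ⟨hbody hx, fun hxv => hvW (mem_singleton.1 hxv ▸ hbody hx)⟩

end ForwardChaining

section Rebody

variable {α : Type*} [DecidableEq α] {Φ : Finset (Finset α × α)} {B L : Finset α}
  {c : Finset α × α}

def rebody (Φ : Finset (Finset α × α)) (B L : Finset α) : Finset (Finset α × α) :=
  Φ.filter (fun c => c.2 ∉ L) ∪ L.image (B, ·)

theorem mem_rebody : c ∈ rebody Φ B L ↔ c ∈ Φ ∧ c.2 ∉ L ∨ c.1 = B ∧ c.2 ∈ L := by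
  rcases c with ⟨C, u⟩
  simp only [rebody, mem_union, mem_filter, mem_image, Prod.mk.injEq]
  constructor
  · rintro (h | ⟨u, hu, rfl, rfl⟩)
    exacts [.inl h, .inr ⟨rfl, hu⟩]
  · rintro (h | ⟨rfl, hu⟩)
    exacts [.inl h, .inr ⟨u, hu, rfl, rfl⟩]

theorem pureHorn_rebody (hΦ : PureHorn Φ) (hB : B.Nonempty) (hBL : Disjoint B L) :
    PureHorn (rebody Φ B L) := by
  intro c hc
  rcases mem_rebody.1 hc with ⟨hcΦ, -⟩ | ⟨hbody, hhead⟩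
  · exact hΦ c hcΦ
  · exact ⟨hbody ▸ hB, hbody ▸ disjoint_right.1 hBL hhead⟩

theorem rebody_bodies_mem {𝓑 : Finset (Finset α)} (hΦ : ∀ c ∈ Φ, c.1 ∈ 𝓑) (hB : B ∈ 𝓑) :
    ∀ c ∈ rebody Φ B L, c.1 ∈ 𝓑 := by
  intro c hc
  rcases mem_rebody.1 hc with ⟨hcΦ, -⟩ | ⟨hbody, -⟩
  · exact hΦ c hcΦ
  · exact hbody ▸ hB

theorem sizeL_rebody :
    sizeL (rebody Φ B L) = sizeL (Φ.filter fun c => c.2 ∉ L) + L.card * (B.card + 1) := by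
  have hdisj : Disjoint (Φ.filter fun c => c.2 ∉ L) (L.image (B, ·)) :=
    disjoint_right.2 fun c hc hc' => by
      obtain ⟨u, hu, rfl⟩ := mem_image.1 hc
      exact (mem_filter.1 hc').2 hu
  rw [sizeL, rebody, sum_union hdisj, sum_image fun _ _ _ _ h => (Prod.mk.inj h).2]
  simp only [sum_const, smul_eq_mul, sizeL]

theorem sizeL_rebody_add_le {f : α → Finset α × α} (hf : ∀ u ∈ L, f u ∈ Φ ∧ (f u).2 = u) :
    sizeL (rebody Φ B L) + ∑ u ∈ L, ((f u).1.card + 1) ≤ sizeL Φ + L.card * (B.card + 1) := by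
  have hf_inj : Set.InjOn f L := fun x hx y hy h => (hf x hx).2.symm.trans (h ▸ (hf y hy).2)
  have hf_sub : L.image f ⊆ Φ.filter fun c => c.2 ∈ L := fun c hc => by
    obtain ⟨u, hu, rfl⟩ := mem_image.1 hc
    exact mem_filter.2 ⟨(hf u hu).1, by rw [(hf u hu).2]; exact hu⟩
  have hsplit := sum_filter_add_sum_filter_not Φ (fun c => c.2 ∈ L) fun c => c.1.card + 1
  have hreplaced : ∑ u ∈ L, ((f u).1.card + 1) ≤ ∑ c ∈ Φ.filter (fun c => c.2 ∈ L), (c.1.card + 1) :=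
    (sum_image (f := fun c : Finset α × α => c.1.card + 1) hf_inj).symm.le.trans
      (sum_le_sum_of_subset hf_sub)
  rw [sizeL_rebody]
  simp only [sizeL] at hsplit ⊢
  omega

theorem sizeL_rebody_le (h : ∀ u ∈ L, ∃ c ∈ Φ, c.2 = u ∧ B.card ≤ c.1.card) :
    sizeL (rebody Φ B L) ≤ sizeL Φ := by
  choose! f hfΦ hfhead hfcard using h
  have hsize := sizeL_rebody_add_le (B := B) fun u hu => ⟨hfΦ u hu, hfhead u hu⟩
  have hcheaper : L.card * (B.card + 1) ≤ ∑ u ∈ L, ((f u).1.card + 1) := by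
    rw [← smul_eq_mul, ← sum_const]
    exact sum_le_sum fun u hu => Nat.succ_le_succ (hfcard u hu)
  omega

end Rebody

section Improvements

variable {α : Type*} [DecidableEq α] {𝓑 : Finset (Finset α)} {Φ : Finset (Finset α × α)}
  {S T B : Finset α} {c : Finset α × α} {i t : ℕ}

theorem price_lt_sizeL_of_head_not_needed (hΦ : Feasible 𝓑 S T Φ) (hc : c ∈ Φ)
    (hcW : c.2 ∉ fcChain Φ S i) (hT : T ⊆ fcChain Φ S (i + 1)) (hcT : c.2 ∉ T) :
    price sizeL 𝓑 S T < sizeL Φ := by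
  have hsub : Φ.erase c ⊆ Φ := erase_subset c Φ
  have hkept : ∀ d ∈ Φ, d.2 ≠ c.2 → d ∈ Φ.erase c := fun d hd hne =>
    mem_erase.2 ⟨by rintro rfl; exact hne rfl, hd⟩
  have hreach : T ⊆ fcChain (Φ.erase c) S (i + 1) := fun u hu =>
    fcChain_sdiff_singleton_subset hcW hkept (i + 1) le_rfl
      (mem_sdiff.2 ⟨hT hu, fun h => hcT (mem_singleton.1 h ▸ hu)⟩)
  have hfeas : Feasible 𝓑 S T (Φ.erase c) :=
    ⟨fun d hd => hΦ.1 d (hsub hd), fun d hd => hΦ.2.1 d (hsub hd),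
      (coe_subset.2 hreach).trans (coe_fcChain_subset_hornClosure _)⟩
  have hsize := sum_erase_add Φ (fun d => d.1.card + 1) hc
  calc price sizeL 𝓑 S T ≤ sizeL (Φ.erase c) := price_le sizeL hfeas
    _ < sizeL Φ := by simp only [sizeL] at hsize ⊢; omega

theorem price_lt_sizeL_of_smaller_body (hΦ : Feasible 𝓑 S T Φ) (hc : c ∈ Φ)
    (hcW : c.2 ∉ fcChain Φ S i) (hB𝓑 : B ∈ 𝓑) (hBne : B.Nonempty)
    (hBW : B ⊆ fcChain Φ S (i + 1)) (hcB : c.2 ∉ B) (hlt : B.card < c.1.card) :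
    price sizeL 𝓑 S T < sizeL Φ := by
  set Ψ := rebody Φ B {c.2}
  have hkept : ∀ d ∈ Φ, d.2 ≠ c.2 → d ∈ Ψ := fun d hd hne =>
    mem_rebody.2 (.inl ⟨hd, by simpa using hne⟩)
  have hBΨ : ↑B ⊆ hornClosure Ψ ↑S := fun u hu =>
    coe_fcChain_subset_hornClosure (i + 1) <| fcChain_sdiff_singleton_subset hcW hkept (i + 1)
      le_rfl (mem_sdiff.2 ⟨hBW hu, fun h => hcB (mem_singleton.1 h ▸ hu)⟩)
  have hcΨ : c.2 ∈ hornClosure Ψ ↑S :=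
    hornClosed_hornClosure Ψ _ (B, c.2) (mem_rebody.2 (.inr ⟨rfl, mem_singleton_self _⟩)) hBΨ
  have hreach : hornClosure Φ ↑S ⊆ hornClosure Ψ ↑S :=
    hornClosure_subset_hornClosure fun d hd => by
      by_cases h : d.2 = c.2
      · exact .inr (h ▸ hcΨ)
      · exact .inl (hkept d hd h)
  have hfeas : Feasible 𝓑 S T Ψ :=
    ⟨pureHorn_rebody hΦ.1 hBne (disjoint_singleton_right.2 hcB), rebody_bodies_mem hΦ.2.1 hB𝓑,
      hΦ.2.2.trans hreach⟩
  have hsize : sizeL Ψ + (c.1.card + 1) ≤ sizeL Φ + (B.card + 1) := by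
    simpa using sizeL_rebody_add_le (Φ := Φ) (B := B) (L := {c.2}) (f := fun _ => c)
      (by simpa using hc)
  calc price sizeL 𝓑 S T ≤ sizeL Ψ := price_le sizeL hfeas
    _ < sizeL Φ := by omega

theorem fcChain_subset_fcChain_rebody {j : ℕ} (hj : j ≤ i + 1) :
    fcChain Φ S j ⊆ fcChain (rebody Φ B (fcChain Φ S (i + 2) \ fcChain Φ S (i + 1))) S j := by
  induction j with
  | zero => exact subset_rfl
  | succ j ih =>
    refine fcStep_subset_fcStep (ih (by omega)) fun d hd hbody _ =>
      mem_rebody.2 (.inl ⟨hd, fun hL => (mem_sdiff.1 hL).2 ?_⟩)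
    exact fcChain_mono hj (mem_fcStep.2 (.inr ⟨d, hd, hbody, rfl⟩))

theorem fcChain_add_two_subset_fcChain_rebody (hBW : B ⊆ fcChain Φ S i) :
    ∀ s, fcChain Φ S (i + 2 + s) ⊆
      fcChain (rebody Φ B (fcChain Φ S (i + 2) \ fcChain Φ S (i + 1))) S (i + 1 + s)
  | 0 => fun u hu => by
    by_cases hu' : u ∈ fcChain Φ S (i + 1)
    · exact fcChain_subset_fcChain_rebody le_rfl hu'
    · exact mem_fcStep.2 (.inr ⟨(B, u), mem_rebody.2 (.inr ⟨rfl, mem_sdiff.2 ⟨hu, hu'⟩⟩),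
        hBW.trans (fcChain_subset_fcChain_rebody (by omega)), rfl⟩)
  | s + 1 => by
    have ih := fcChain_add_two_subset_fcChain_rebody hBW s
    refine fcStep_subset_fcStep ih fun d hd _ hhead => mem_rebody.2 (.inl ⟨hd, fun hL => ?_⟩)
    exact hhead (ih (fcChain_mono (by omega) (mem_sdiff.1 hL).1))

theorem fcChain_rebody_subset (hstab : fcChain Φ S t = fcChain Φ S (t + 1)) (hit : i + 2 ≤ t)
    (j : ℕ) :
    fcChain (rebody Φ B (fcChain Φ S (i + 2) \ fcChain Φ S (i + 1))) S j ⊆ fcChain Φ S t := by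
  refine coe_subset.1 (coe_fcChain_subset_of_hornClosed
    (coe_subset.2 (fcChain_mono t.zero_le)) (fun d hd hbody => ?_) j)
  rcases mem_rebody.1 hd with ⟨hdΦ, -⟩ | ⟨-, hL⟩
  · exact hornClosed_fcChain hstab d hdΦ hbody
  · exact fcChain_mono hit (mem_sdiff.1 hL).1

theorem exists_feasible_sizeL_le_stable_at_pred (hΦ : Feasible 𝓑 S T Φ)
    (hstab : fcChain Φ S t = fcChain Φ S (t + 1)) (hit : i + 2 ≤ t) (hB𝓑 : B ∈ 𝓑)
    (hBne : B.Nonempty) (hBW : B ⊆ fcChain Φ S i)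
    (hmin : ∀ d ∈ Φ, d.1 ⊆ fcChain Φ S (i + 1) → B.card ≤ d.1.card) :
    ∃ Ψ, Feasible 𝓑 S T Ψ ∧ sizeL Ψ ≤ sizeL Φ ∧ fcChain Ψ S (t - 1) = fcChain Ψ S (t - 1 + 1) := by
  set L := fcChain Φ S (i + 2) \ fcChain Φ S (i + 1)
  have hlower : fcChain Φ S t ⊆ fcChain (rebody Φ B L) S (t - 1) := by
    obtain ⟨s, rfl⟩ : ∃ s, t = i + 2 + s := ⟨t - (i + 2), by omega⟩
    rw [show i + 2 + s - 1 = i + 1 + s by omega]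
    exact fcChain_add_two_subset_fcChain_rebody hBW s
  have hupper := fcChain_rebody_subset (B := B) hstab hit
  have hBL : Disjoint B L := disjoint_left.2 fun u hu hL =>
    (mem_sdiff.1 hL).2 (fcChain_mono i.le_succ (hBW hu))
  refine ⟨rebody Φ B L, ⟨pureHorn_rebody hΦ.1 hBne hBL, rebody_bodies_mem hΦ.2.1 hB𝓑, ?_⟩,
    sizeL_rebody_le fun u hu => ?_, (fcChain_mono (t - 1).le_succ).antisymm
      ((hupper _).trans hlower)⟩
  · have hT := hΦ.2.2
    rw [hornClosure_eq_fcChain hstab] at hT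
    exact hT.trans ((coe_subset.2 hlower).trans (coe_fcChain_subset_hornClosure _))
  · obtain ⟨d, hd, hbody, rfl⟩ := exists_clause_of_mem_fcStep (mem_sdiff.1 hu).1 (mem_sdiff.1 hu).2
    exact ⟨d, hd, rfl, hmin d hd hbody⟩

end Improvements

theorem stmt11_general {V : Type*} [DecidableEq V]
    (𝓑 : Finset (Finset V))
    (hne : ∀ B ∈ 𝓑, B.Nonempty)
    (S S' : Finset V)
    (Φ : Finset (Finset V × V)) (t : ℕ)
    (hPH : PureHorn Φ) (hbodies : ∀ c ∈ Φ, c.1 ∈ 𝓑)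
    (hSreach : ↑S' ⊆ hornClosure Φ ↑S)
    (hopt : sizeL Φ = price sizeL 𝓑 S S')
    (hstab : fcChain Φ S t = fcChain Φ S (t + 1))
    (hround : ∀ (Φ' : Finset (Finset V × V)) (t' : ℕ), PureHorn Φ' →
      (∀ c ∈ Φ', c.1 ∈ 𝓑) → ↑S' ⊆ hornClosure Φ' ↑S →
      sizeL Φ' = price sizeL 𝓑 S S' →
      fcChain Φ' S t' = fcChain Φ' S (t' + 1) → t ≤ t')
    (Bseq : ℕ → Finset V)
    (hBseq : ∀ i < t, Bseq i ∈ 𝓑 ∧ Bseq i ⊆ fcChain Φ S i ∧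
      ∀ B' ∈ 𝓑, B' ⊆ fcChain Φ S i → (Bseq i).card ≤ B'.card)
    (hBt : Bseq t = S')
    : ∀ i : ℕ, i < t → fcChain Φ S (i + 1) \ fcChain Φ S i ⊆ Bseq (i + 1) := by
  intro i hi v hv
  by_contra hvB
  have hΦ : Feasible 𝓑 S S' Φ := ⟨hPH, hbodies, hSreach⟩
  obtain ⟨hvW, hvW'⟩ := mem_sdiff.1 hv
  obtain ⟨c, hc, hcW, rfl⟩ := exists_clause_of_mem_fcStep hvW hvW'
  obtain ⟨hBi, hBiW, hBimin⟩ := hBseq i hi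
  rcases (show i + 1 ≤ t from hi).eq_or_lt with hlast | hnext
  · have hS'W : S' ⊆ fcChain Φ S (i + 1) := by
      rw [hlast, ← coe_subset, ← hornClosure_eq_fcChain hstab]
      exact hSreach
    have := price_lt_sizeL_of_head_not_needed hΦ hc hvW' hS'W (by rwa [← hBt, ← hlast])
    omega
  obtain ⟨hBi1, hBi1W, hBi1min⟩ := hBseq (i + 1) hnext
  rcases (hBi1min _ hBi (hBiW.trans (fcChain_mono i.le_succ))).lt_or_eq with hlt | heq
  · have := price_lt_sizeL_of_smaller_body hΦ hc hvW' hBi1 (hne _ hBi1) hBi1W hvB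
      (hlt.trans_le (hBimin _ (hbodies c hc) hcW))
    omega
  · obtain ⟨Ψ, hΨ, hsize, hstabΨ⟩ := exists_feasible_sizeL_le_stable_at_pred hΦ hstab hnext hBi
      (hne _ hBi) hBiW fun d hd hbody => heq ▸ hBi1min d.1 (hbodies d hd) hbody
    have := hround Ψ (t - 1) hΨ.1 hΨ.2.1 hΨ.2.2
      (le_antisymm (hsize.trans hopt.le) (price_le sizeL hΨ)) hstabΨ
    omega

/-- Proposition 2: in the forward-chaining chain of a round-minimal L-optimal
CNF `Φ` for `price_L(S,S')`, `W_{i+1} \ W_i ⊆ B_{i+1}` for `i = 0,…,t-1`. -/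
theorem stmt11 {V : Type*} [Fintype V] [DecidableEq V]
    (𝓑 : Finset (Finset V))
    (hne : ∀ B ∈ 𝓑, B.Nonempty) (hproper : ∀ B ∈ 𝓑, B ≠ Finset.univ)
    (hsperner : ∀ B ∈ 𝓑, ∀ B' ∈ 𝓑, B ⊆ B' → B = B')
    (hcover : ∀ v : V, ∃ B ∈ 𝓑, v ∈ B)
    (hinter : ∀ v : V, ∃ B ∈ 𝓑, v ∉ B)
    (S S' : Finset V) (hS : ∃ B ∈ 𝓑, B ⊆ S)
    (Φ : Finset (Finset V × V)) (t : ℕ)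
    (hPH : PureHorn Φ) (hbodies : ∀ c ∈ Φ, c.1 ∈ 𝓑)
    (hSreach : ↑S' ⊆ hornClosure Φ ↑S)
    (hopt : sizeL Φ = price sizeL 𝓑 S S')
    (hstab : fcChain Φ S t = fcChain Φ S (t + 1))
    (htleast : ∀ j < t, fcChain Φ S j ≠ fcChain Φ S (j + 1))
    (hround : ∀ (Φ' : Finset (Finset V × V)) (t' : ℕ), PureHorn Φ' →
      (∀ c ∈ Φ', c.1 ∈ 𝓑) → ↑S' ⊆ hornClosure Φ' ↑S →
      sizeL Φ' = price sizeL 𝓑 S S' →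
      fcChain Φ' S t' = fcChain Φ' S (t' + 1) → t ≤ t')
    (Bseq : ℕ → Finset V)
    (hBseq : ∀ i < t, Bseq i ∈ 𝓑 ∧ Bseq i ⊆ fcChain Φ S i ∧
      ∀ B' ∈ 𝓑, B' ⊆ fcChain Φ S i → (Bseq i).card ≤ B'.card)
    (hBt : Bseq t = S')
    : ∀ i : ℕ, i < t → fcChain Φ S (i + 1) \ fcChain Φ S i ⊆ Bseq (i + 1) :=
  stmt11_general 𝓑 hne S S' Φ t hPH hbodies hSreach hopt hstab hround Bseq hBseq hBt
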